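/- arXiv:2410.20952 — 3 statements merged into one kernel-verified Lean document; each statement's English description precedes it below -/
import Mathlib

section
/- For n ≥ 0 and k ≥ 1 let s_B(n,k) denote the number of permutations σ in the nonsimple binary butterfly group B_{2^n} with C(σ) = k. Then for all n ≥ 0 and all k ≥ 1: s_B(n+1, k) = 2^{2^n − 1} · s_B(n,k) + Σ_{j=1}^{k−1} s_B(n,j) · s_B(n, k−j). -/
/-- Kronecker product of permutations: `(i, r) ↦ (σ i, π r)` under the
row-major identification `Fin (a * b) ≃ Fin a × Fin b`. -/
def permKron {a b : ℕ} (σ : Equiv.Perm (Fin a)) (π : Equiv.Perm (Fin b)) :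
    Equiv.Perm (Fin (a * b)) :=
  finProdFinEquiv.symm.trans ((Equiv.prodCongr σ π).trans finProdFinEquiv)

/-- Direct (block) sum of permutations: `(i, r) ↦ (i, π i r)`. -/
def permBlockSum {a b : ℕ} (π : Fin a → Equiv.Perm (Fin b)) :
    Equiv.Perm (Fin (a * b)) :=
  finProdFinEquiv.symm.trans ((Equiv.prodCongrRight π).trans finProdFinEquiv)

/-- The simple `m`-nary butterfly permutations of `Fin (m ^ n)`:
Kronecker products `τ^{a₁} ⊗ ⋯ ⊗ τ^{aₙ}` of powers of the standard `m`-cycle `τ = finRotate m`. -/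
def simpleButterfly (m : ℕ) : (n : ℕ) → Set (Equiv.Perm (Fin (m ^ n)))
  | 0 => {1}
  | n + 1 =>
    {σ | ∃ (a : ℤ) (π : Equiv.Perm (Fin (m ^ n))), π ∈ simpleButterfly m n ∧
      σ = (finCongr (pow_succ' m n).symm).permCongr (permKron (finRotate m ^ a) π)}

/-- The nonsimple `m`-nary butterfly permutations of `Fin (m ^ n)`:
`B₀ = {1}`, `B_{n+1} = {(τ^a ⊗ id) ∘ (σ₁ ⊕ ⋯ ⊕ σ_m) : σᵢ ∈ B_n}`. -/
def nonsimpleButterfly (m : ℕ) : (n : ℕ) → Set (Equiv.Perm (Fin (m ^ n)))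
  | 0 => {1}
  | n + 1 =>
    {σ | ∃ (a : ℤ) (π : Fin m → Equiv.Perm (Fin (m ^ n))),
      (∀ i, π i ∈ nonsimpleButterfly m n) ∧
      σ = (finCongr (pow_succ' m n).symm).permCongr
        (permKron (finRotate m ^ a) 1 * permBlockSum π)}

/-- The length of the longest increasing subsequence of a permutation. -/
noncomputable def LIS {M : ℕ} (σ : Equiv.Perm (Fin M)) : ℕ :=
  sSup {k | ∃ t : Finset (Fin M), t.card = k ∧ StrictMonoOn (⇑σ) ↑t}

/-- The length of the longest decreasing subsequence of a permutation. -/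
noncomputable def LDS {M : ℕ} (σ : Equiv.Perm (Fin M)) : ℕ :=
  sSup {k | ∃ t : Finset (Fin M), t.card = k ∧ StrictAntiOn (⇑σ) ↑t}

/-- The number of cycles in the disjoint cycle decomposition of `σ`,
counting fixed points as cycles of length 1. -/
def numCycles {M : ℕ} (σ : Equiv.Perm (Fin M)) : ℕ :=
  Multiset.card σ.cycleType + (Finset.univ.filter fun x => σ x = x).card

/-- The number of fixed points of `σ`. -/
def numFixed {M : ℕ} (σ : Equiv.Perm (Fin M)) : ℕ :=
  (Finset.univ.filter fun x => σ x = x).card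

/-- `s_B(n,k)`: the number of nonsimple binary butterfly permutations `σ ∈ B_{2^n}`
with `C(σ) = k` (the "butterfly Stirling numbers of the first kind"). -/
noncomputable def sBCount (n k : ℕ) : ℕ :=
  {σ | σ ∈ nonsimpleButterfly 2 n ∧ numCycles σ = k}.ncard

/-!
Under `Fin (2 ^ (n + 1)) ≃ Fin 2 × Fin (2 ^ n)`, every element of `B_{2^(n+1)}` is
`(i, r) ↦ (c i, πᵢ r)` for a unique `c ∈ Perm (Fin 2)` and unique `π₀, π₁ ∈ B_{2^n}`.
For `c = 1` the cycles are those of `π₀` together with those of `π₁`, which gives the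
convolution term. For `c` the swap, every cycle meets the block `0`, on which the first-return
map is `π₁ * π₀`; so there are `C(π₁ * π₀)` cycles. As `B_{2^n}` is a group (an iterated
wreath product), `(π₀, π₁) ↦ (π₀, π₁ * π₀)` is a bijection of `B_{2^n} × B_{2^n}`, which gives
the term `|B_{2^n}| · s_B(n, k)`, and `|B_{2^n}| = 2 ^ (2 ^ n - 1)` by the same decomposition.
-/

open Finset

section Counting

variable {α β G R : Type*}

theorem Set.ncard_setOf_prod [Fintype α] [Fintype β] (Q : α × β → Prop) :
    {q | Q q}.ncard = ∑ a, {b | Q (a, b)}.ncard := by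
  classical
  simp only [Set.ncard_eq_toFinset_card', Set.toFinset_ofPred, Finset.card_filter,
    Fintype.sum_prod_type]

theorem ncard_setOf_add_eq [Fintype α] (A : Set α) (f : α → ℕ) (k : ℕ) :
    {p : α × α | p.1 ∈ A ∧ p.2 ∈ A ∧ f p.1 + f p.2 = k}.ncard =
      ∑ q ∈ antidiagonal k, {x | x ∈ A ∧ f x = q.1}.ncard * {x | x ∈ A ∧ f x = q.2}.ncard := by
  classical
  simp only [Set.ncard_eq_toFinset_card', Set.toFinset_ofPred]
  rw [card_eq_sum_card_fiberwise (f := fun p => (f p.1, f p.2)) (t := antidiagonal k)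
    fun p hp => by simp_all]
  refine sum_congr rfl fun ⟨i, j⟩ hij => ?_
  rw [← card_product]
  congr 1
  ext ⟨x, y⟩
  simp only [HasAntidiagonal.mem_antidiagonal] at hij
  simp only [mem_filter, mem_univ, true_and, mem_product, Prod.ext_iff]
  constructor
  · rintro ⟨⟨hx, hy, -⟩, rfl, rfl⟩
    exact ⟨⟨hx, rfl⟩, hy, rfl⟩
  · rintro ⟨⟨hx, rfl⟩, hy, rfl⟩
    exact ⟨⟨hx, hy, hij⟩, rfl, rfl⟩

theorem ncard_setOf_mul_mem [Group G] [Fintype G] (H : Subgroup G) (P : G → Prop) :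
    {p : G × G | p.1 ∈ H ∧ p.2 ∈ H ∧ P (p.2 * p.1)}.ncard =
      (H : Set G).ncard * {g | g ∈ H ∧ P g}.ncard := by
  let shear : G × G ≃ G × G := (Equiv.refl G).prodShear Equiv.mulRight
  have h : {p : G × G | p.1 ∈ H ∧ p.2 ∈ H ∧ P (p.2 * p.1)} =
      shear ⁻¹' ((H : Set G) ×ˢ {g | g ∈ H ∧ P g}) := by
    ext ⟨a, b⟩
    simp +contextual [shear, Subgroup.mul_mem_cancel_right]
  rw [h, Set.ncard_preimage_of_injective_subset_range shear.injective (by simp), Set.ncard_prod]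

theorem sum_antidiagonal_mul_eq_sum_Ico [Semiring R] {a : ℕ → R} (ha : a 0 = 0) (k : ℕ) :
    ∑ q ∈ antidiagonal k, a q.1 * a q.2 = ∑ j ∈ Ico 1 k, a j * a (k - j) := by
  rw [Nat.sum_antidiagonal_eq_sum_range_succ (fun i j => a i * a j)]
  rcases k with _ | k
  · simp [ha]
  rw [sum_range_succ, range_eq_Ico, sum_eq_sum_Ico_succ_bot k.succ_pos]
  simp [ha]

end Counting

namespace Equiv.Perm

variable {α β γ ι : Type*}

noncomputable def cycleCount (σ : Perm α) : ℕ := Nat.card (Quotient (SameCycle.setoid σ))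

theorem SameCycle.map {σ : Perm α} {τ : Perm β} {f : α → β}
    (hf : ∀ x, τ.SameCycle (f (σ x)) (f x)) {x y : α} (h : σ.SameCycle x y) :
    τ.SameCycle (f x) (f y) := by
  obtain ⟨n, rfl⟩ := h
  induction n using Int.induction_on with
  | zero => exact .refl _ _
  | succ n ih =>
    rw [add_comm, zpow_add, zpow_one, mul_apply]
    exact ih.trans (hf _).symm
  | pred n ih =>
    have h := hf ((σ ^ (-(n : ℤ) - 1)) x)
    rw [← mul_apply, ← zpow_one_add, add_sub_cancel] at h
    exact ih.trans h

theorem cycleCount_eq_natCard {σ : Perm α} (g : α → γ) (hg : Function.Surjective g)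
    (h : ∀ x y, g x = g y ↔ σ.SameCycle x y) : cycleCount σ = Nat.card γ := by
  refine Nat.card_congr (.ofBijective (Quotient.lift g fun x y hxy => (h x y).2 hxy) ⟨?_, ?_⟩)
  · rintro ⟨x⟩ ⟨y⟩ hxy
    exact Quotient.sound ((h x y).1 hxy)
  · intro z
    obtain ⟨x, rfl⟩ := hg z
    exact ⟨⟦x⟧, rfl⟩

theorem cycleCount_congr {σ : Perm α} {τ : Perm β} (f : α → β) (g : β → α)
    (hf : ∀ x, τ.SameCycle (f (σ x)) (f x)) (hg : ∀ y, σ.SameCycle (g (τ y)) (g y))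
    (hgf : ∀ x, σ.SameCycle (g (f x)) x) (hfg : ∀ y, τ.SameCycle (f (g y)) y) :
    cycleCount σ = cycleCount τ := by
  refine cycleCount_eq_natCard (fun x => (⟦f x⟧ : Quotient (SameCycle.setoid τ))) ?_ ?_
  · rintro ⟨y⟩
    exact ⟨g y, Quotient.sound (hfg y)⟩
  · intro x y
    refine ⟨fun hxy => ?_, fun hxy => Quotient.sound (SameCycle.map hf hxy)⟩
    exact (hgf x).symm.trans ((SameCycle.map hg (Quotient.exact hxy)).trans (hgf y))

theorem cycleCount_permCongr (e : α ≃ β) (σ : Perm α) :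
    cycleCount (e.permCongr σ) = cycleCount σ :=
  cycleCount_congr e.symm e (fun _ => by simpa using SameCycle.rfl)
    (fun x => by simpa using (sameCycle_apply_left (f := e.permCongr σ) (x := e x)).2 .rfl)
    (fun _ => by simpa using SameCycle.rfl) (fun _ => by simpa using SameCycle.rfl)

theorem one_le_cycleCount [Finite α] [Nonempty α] (σ : Perm α) : 1 ≤ cycleCount σ :=
  have : Nonempty (Quotient (SameCycle.setoid σ)) := .map (⟦·⟧) ‹_›
  Nat.card_pos

theorem cycleOf_eq_cycleOf_iff [Fintype α] [DecidableEq α] {σ : Perm α} {x y : α}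
    (hx : σ x ≠ x) : σ.cycleOf x = σ.cycleOf y ↔ σ.SameCycle x y := by
  refine ⟨fun h => ?_, SameCycle.cycleOf_eq⟩
  have hxx : x ∈ (σ.cycleOf x).support := mem_support_cycleOf_iff.2 ⟨.rfl, mem_support.2 hx⟩
  exact (mem_support_cycleOf_iff.1 (h ▸ hxx)).1.symm

theorem cycleCount_eq_card_cycleType_add_card_fixedPoints [Fintype α] [DecidableEq α]
    (σ : Perm α) : cycleCount σ = Multiset.card σ.cycleType + #{x | σ x = x} := by
  let g : α → σ.cycleFactorsFinset ⊕ {x // σ x = x} := fun x =>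
    if h : σ x = x then .inr ⟨x, h⟩
    else .inl ⟨σ.cycleOf x, cycleOf_mem_cycleFactorsFinset_iff.2 (mem_support.2 h)⟩
  have hg : Function.Surjective g := by
    rintro (⟨c, hc⟩ | ⟨x, hx⟩)
    · obtain ⟨x, hx⟩ := (mem_cycleFactorsFinset_iff.1 hc).1.nonempty_support
      have hσx : σ x ≠ x := mem_support.1 (mem_cycleFactorsFinset_support_le hc hx)
      exact ⟨x, by simp [g, hσx, cycle_is_cycleOf hx hc]⟩
    · exact ⟨x, by simp [g, hx]⟩
  have hgiff : ∀ x y, g x = g y ↔ σ.SameCycle x y := by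
    intro x y
    by_cases hx : σ x = x <;> by_cases hy : σ y = y
    · simpa [g, hx, hy] using ⟨fun h => h ▸ .rfl, fun h => h.eq_of_left hx⟩
    · simpa [g, hx, hy] using fun h => hy (h.apply_eq_self_iff.1 hx)
    · simpa [g, hx, hy] using fun h => hx (h.apply_eq_self_iff.2 hy)
    · simpa [g, hx, hy] using cycleOf_eq_cycleOf_iff hx
  rw [cycleCount_eq_natCard g hg hgiff, Nat.card_sum, Nat.card_eq_fintype_card,
    Nat.card_eq_fintype_card, Fintype.card_coe, Fintype.card_subtype, cycleType_def,
    Multiset.card_map, Finset.card_val]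

def prodCongrRightHom : (ι → Perm β) →* Perm (ι × β) where
  toFun := prodCongrRight
  map_one' := by ext <;> rfl
  map_mul' _ _ := by ext <;> rfl

theorem prodCongrRight_zpow (π : ι → Perm β) (n : ℤ) :
    prodCongrRight π ^ n = prodCongrRight fun i => π i ^ n :=
  (map_zpow prodCongrRightHom π n).symm

theorem sameCycle_prodCongrRight {π : ι → Perm β} {i j : ι} {x y : β} :
    SameCycle (prodCongrRight π) (i, x) (j, y) ↔ i = j ∧ (π i).SameCycle x y := by
  simp only [SameCycle, prodCongrRight_zpow, prodCongrRight_apply, Prod.mk.injEq]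
  constructor
  · rintro ⟨n, rfl, h⟩
    exact ⟨rfl, n, h⟩
  · rintro ⟨rfl, n, h⟩
    exact ⟨n, rfl, h⟩

theorem cycleCount_prodCongrRight [Fintype ι] [Finite β] (π : ι → Perm β) :
    cycleCount (prodCongrRight π) = ∑ i, cycleCount (π i) := by
  rw [cycleCount_eq_natCard (γ := Σ i, Quotient (SameCycle.setoid (π i)))
    (fun p => ⟨p.1, ⟦p.2⟧⟩), Nat.card_sigma]
  · rfl
  · rintro ⟨i, ⟨x⟩⟩
    exact ⟨(i, x), rfl⟩
  · rintro ⟨i, x⟩ ⟨j, y⟩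
    rw [sameCycle_prodCongrRight, Sigma.mk.inj_iff]
    constructor
    · rintro ⟨rfl, h⟩
      exact ⟨rfl, Quotient.exact (eq_of_heq h)⟩
    · rintro ⟨rfl, h⟩
      exact ⟨rfl, heq_of_eq (Quotient.sound h)⟩

def wreathPerm (c : Perm ι) (π : ι → Perm β) : Perm (ι × β) :=
  Equiv.prodCongr c (1 : Perm β) * prodCongrRight π

@[simp]
theorem wreathPerm_apply (c : Perm ι) (π : ι → Perm β) (p : ι × β) :
    wreathPerm c π p = (c p.1, π p.1 p.2) := rfl

theorem wreathPerm_one_left (π : ι → Perm β) : wreathPerm 1 π = prodCongrRight π := rfl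

theorem wreathPerm_mul (c c' : Perm ι) (π π' : ι → Perm β) :
    wreathPerm c π * wreathPerm c' π' = wreathPerm (c * c') fun i => π (c' i) * π' i := by
  ext ⟨i, x⟩ <;> rfl

theorem wreathPerm_one : wreathPerm 1 (1 : ι → Perm β) = 1 := rfl

theorem wreathPerm_inv (c : Perm ι) (π : ι → Perm β) :
    (wreathPerm c π)⁻¹ = wreathPerm c⁻¹ fun i => (π (c⁻¹ i))⁻¹ := by
  rw [inv_eq_iff_mul_eq_one, wreathPerm_mul]
  ext ⟨i, x⟩ <;> simp

theorem wreathPerm_inj [Nonempty β] {c c' : Perm ι} {π π' : ι → Perm β} :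
    wreathPerm c π = wreathPerm c' π' ↔ c = c' ∧ π = π' := by
  refine ⟨fun h => ⟨?_, ?_⟩, fun ⟨hc, hπ⟩ => hc ▸ hπ ▸ rfl⟩
  · ext i
    exact congrArg (fun p => (p.1 : ι)) (congr($h (i, Classical.arbitrary β)))
  · ext i x
    exact congrArg (fun p => (p.2 : β)) (congr($h (i, x)))

def wreathSubgroup (H : Subgroup (Perm ι)) (K : Subgroup (Perm β)) :
    Subgroup (Perm (ι × β)) where
  carrier := {σ | ∃ c ∈ H, ∃ π : ι → Perm β, (∀ i, π i ∈ K) ∧ wreathPerm c π = σ}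
  mul_mem' := by
    rintro _ _ ⟨c, hc, π, hπ, rfl⟩ ⟨c', hc', π', hπ', rfl⟩
    exact ⟨c * c', mul_mem hc hc', _, fun i => mul_mem (hπ _) (hπ' i),
      (wreathPerm_mul c c' π π').symm⟩
  one_mem' := ⟨1, one_mem H, 1, fun _ => one_mem K, wreathPerm_one⟩
  inv_mem' := by
    rintro _ ⟨c, hc, π, hπ, rfl⟩
    exact ⟨c⁻¹, inv_mem hc, _, fun i => inv_mem (hπ _), (wreathPerm_inv c π).symm⟩

theorem cycleCount_wreathPerm_swap [Finite β] (π : Fin 2 → Perm β) :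
    cycleCount (wreathPerm (swap 0 1) π) = cycleCount (π 1 * π 0) := by
  refine cycleCount_congr (fun p => if p.1 = 0 then p.2 else π 1 p.2) (fun x => (0, x))
    ?_ ?_ ?_ ?_
  · rintro ⟨i, x⟩
    fin_cases i
    · simpa using (sameCycle_apply_left (f := π 1 * π 0)).2 SameCycle.rfl
    · simpa using SameCycle.rfl
  · intro x
    have h : (wreathPerm (swap 0 1) π ^ 2) (0, x) = (0, (π 1 * π 0) x) := by simp [sq]
    exact h ▸ sameCycle_pow_left.2 .rfl
  · rintro ⟨i, x⟩
    fin_cases i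
    · simpa using SameCycle.rfl
    · have h : wreathPerm (swap 0 1) π (1, x) = (0, π 1 x) := by simp
      exact h ▸ sameCycle_apply_left.2 .rfl
  · intro x
    simpa using SameCycle.rfl

end Equiv.Perm

open Equiv Equiv.Perm

theorem Fintype.sum_perm_fin_two {M : Type*} [AddCommMonoid M] (f : Perm (Fin 2) → M) :
    ∑ c, f c = f 1 + f (swap 0 1) := by
  rw [show (univ : Finset (Perm (Fin 2))) = {1, swap 0 1} by decide, sum_pair (by decide)]

def butterflyEquiv (m n : ℕ) : Fin m × Fin (m ^ n) ≃ Fin (m ^ (n + 1)) :=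
  finProdFinEquiv.trans (finCongr (pow_succ' m n).symm)

theorem permCongr_permKron_mul_permBlockSum (m n : ℕ) (c : Perm (Fin m))
    (π : Fin m → Perm (Fin (m ^ n))) :
    (finCongr (pow_succ' m n).symm).permCongr (permKron c 1 * permBlockSum π) =
      (butterflyEquiv m n).permCongr (wreathPerm c π) := by
  ext x
  simp [permKron, permBlockSum, butterflyEquiv, wreathPerm, Equiv.permCongr_apply]

def nonsimpleButterflySubgroup (m : ℕ) : (n : ℕ) → Subgroup (Perm (Fin (m ^ n)))
  | 0 => ⊥
  | n + 1 => (wreathSubgroup (Subgroup.zpowers (finRotate m))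
      (nonsimpleButterflySubgroup m n)).map (butterflyEquiv m n).permCongrHom.toMonoidHom

theorem coe_nonsimpleButterflySubgroup (m n : ℕ) :
    (nonsimpleButterflySubgroup m n : Set (Perm (Fin (m ^ n)))) = nonsimpleButterfly m n := by
  induction n with
  | zero => exact Subgroup.coe_bot
  | succ n ih =>
    ext σ
    simp only [nonsimpleButterflySubgroup, Subgroup.coe_map, Set.mem_image, SetLike.mem_coe,
      wreathSubgroup, Subgroup.mem_mk, Submonoid.mem_mk, Subsemigroup.mem_mk, Set.mem_ofPred_eq,
      Subgroup.mem_zpowers_iff, nonsimpleButterfly, ← ih, permCongr_permKron_mul_permBlockSum]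
    constructor
    · rintro ⟨_, ⟨_, ⟨a, rfl⟩, π, hπ, rfl⟩, rfl⟩
      exact ⟨a, π, hπ, rfl⟩
    · rintro ⟨a, π, hπ, rfl⟩
      exact ⟨_, ⟨_, ⟨a, rfl⟩, π, hπ, rfl⟩, rfl⟩

theorem zpowers_finRotate_two : Subgroup.zpowers (finRotate 2) = ⊤ := by
  have h : ∀ c : Perm (Fin 2), c = 1 ∨ c = finRotate 2 := by decide
  refine eq_top_iff.2 fun c _ => ?_
  obtain rfl | rfl := h c
  · exact one_mem _
  · exact Subgroup.mem_zpowers _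

def butterflyStep (n : ℕ) (c : Perm (Fin 2)) (a b : Perm (Fin (2 ^ n))) :
    Perm (Fin (2 ^ (n + 1))) :=
  (butterflyEquiv 2 n).permCongr (wreathPerm c ![a, b])

theorem butterflyStep_inj {n : ℕ} {c c' : Perm (Fin 2)} {a a' b b' : Perm (Fin (2 ^ n))} :
    butterflyStep n c a b = butterflyStep n c' a' b' ↔ c = c' ∧ a = a' ∧ b = b' := by
  simp [butterflyStep, wreathPerm_inj, Matrix.vecCons_inj]

theorem mem_nonsimpleButterfly_two_succ {n : ℕ} {σ : Perm (Fin (2 ^ (n + 1)))} :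
    σ ∈ nonsimpleButterfly 2 (n + 1) ↔ ∃ c a b, a ∈ nonsimpleButterfly 2 n ∧
      b ∈ nonsimpleButterfly 2 n ∧ butterflyStep n c a b = σ := by
  simp only [← coe_nonsimpleButterflySubgroup, SetLike.mem_coe, nonsimpleButterflySubgroup,
    zpowers_finRotate_two]
  constructor
  · rintro ⟨_, ⟨c, -, π, hπ, rfl⟩, rfl⟩
    refine ⟨c, π 0, π 1, hπ 0, hπ 1, ?_⟩
    have : ![π 0, π 1] = π := by ext i; fin_cases i <;> rfl
    rw [butterflyStep, this]
    rfl
  · rintro ⟨c, a, b, ha, hb, rfl⟩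
    exact ⟨_, ⟨c, Subgroup.mem_top c, ![a, b], Fin.forall_fin_two.2 ⟨ha, hb⟩, rfl⟩, rfl⟩

theorem numCycles_eq_cycleCount {M : ℕ} (σ : Perm (Fin M)) : numCycles σ = cycleCount σ :=
  (cycleCount_eq_card_cycleType_add_card_fixedPoints σ).symm

theorem numCycles_butterflyStep_one (n : ℕ) (a b : Perm (Fin (2 ^ n))) :
    numCycles (butterflyStep n 1 a b) = numCycles a + numCycles b := by
  simp [numCycles_eq_cycleCount, butterflyStep, cycleCount_permCongr, wreathPerm_one_left,
    cycleCount_prodCongrRight]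

theorem numCycles_butterflyStep_swap (n : ℕ) (a b : Perm (Fin (2 ^ n))) :
    numCycles (butterflyStep n (swap 0 1) a b) = numCycles (b * a) := by
  simp [numCycles_eq_cycleCount, butterflyStep, cycleCount_permCongr, cycleCount_wreathPerm_swap]

theorem sBCount_zero (n : ℕ) : sBCount n 0 = 0 := by
  simp [sBCount, numCycles_eq_cycleCount, Nat.one_le_iff_ne_zero.1 (one_le_cycleCount _)]

theorem ncard_nonsimpleButterfly_two_succ (n : ℕ) (P : Perm (Fin (2 ^ (n + 1))) → Prop) :
    {σ | σ ∈ nonsimpleButterfly 2 (n + 1) ∧ P σ}.ncard =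
      {p : Perm (Fin (2 ^ n)) × Perm (Fin (2 ^ n)) | p.1 ∈ nonsimpleButterfly 2 n ∧
        p.2 ∈ nonsimpleButterfly 2 n ∧ P (butterflyStep n 1 p.1 p.2)}.ncard +
      {p : Perm (Fin (2 ^ n)) × Perm (Fin (2 ^ n)) | p.1 ∈ nonsimpleButterfly 2 n ∧
        p.2 ∈ nonsimpleButterfly 2 n ∧ P (butterflyStep n (swap 0 1) p.1 p.2)}.ncard := by
  let step : Perm (Fin 2) × Perm (Fin (2 ^ n)) × Perm (Fin (2 ^ n)) → Perm (Fin (2 ^ (n + 1))) :=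
    fun q => butterflyStep n q.1 q.2.1 q.2.2
  have hstep : Function.Injective step := fun q q' h => by
    obtain ⟨hc, ha, hb⟩ := butterflyStep_inj.1 h
    exact Prod.ext hc (Prod.ext ha hb)
  have himage : {σ | σ ∈ nonsimpleButterfly 2 (n + 1) ∧ P σ} = step ''
      {q | q.2.1 ∈ nonsimpleButterfly 2 n ∧ q.2.2 ∈ nonsimpleButterfly 2 n ∧ P (step q)} := by
    ext σ
    simp only [Set.mem_ofPred_eq, mem_nonsimpleButterfly_two_succ, Set.mem_image, step,
      Prod.exists]
    constructor
    · rintro ⟨⟨c, a, b, ha, hb, rfl⟩, hP⟩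
      exact ⟨c, a, b, ⟨ha, hb, hP⟩, rfl⟩
    · rintro ⟨c, a, b, ⟨ha, hb, hP⟩, rfl⟩
      exact ⟨⟨c, a, b, ha, hb, rfl⟩, hP⟩
  rw [himage, Set.ncard_image_of_injective _ hstep, Set.ncard_setOf_prod,
    Fintype.sum_perm_fin_two]

theorem ncard_nonsimpleButterfly_two (n : ℕ) :
    (nonsimpleButterfly 2 n).ncard = 2 ^ (2 ^ n - 1) := by
  induction n with
  | zero => simp [nonsimpleButterfly]
  | succ n ih =>
    have h := ncard_nonsimpleButterfly_two_succ n fun _ => True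
    simp only [and_true, ← Set.mem_prod, Set.ofPred_mem_eq] at h
    rw [h, Set.ncard_prod, ih, ← two_mul, ← pow_add, ← pow_succ']
    congr 1
    have := Nat.one_le_two_pow (n := n)
    rw [pow_succ]
    omega

theorem sBCount_recursion_general (n k : ℕ) :
    sBCount (n + 1) k =
      2 ^ (2 ^ n - 1) * sBCount n k +
        ∑ j ∈ Finset.Ico 1 k, sBCount n j * sBCount n (k - j) := by
  have hsplit := ncard_nonsimpleButterfly_two_succ n (numCycles · = k)
  have hshear := ncard_setOf_mul_mem (nonsimpleButterflySubgroup 2 n) (numCycles · = k)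
  simp only [numCycles_butterflyStep_one, numCycles_butterflyStep_swap] at hsplit
  simp only [← SetLike.mem_coe, coe_nonsimpleButterflySubgroup] at hshear
  rw [sBCount, hsplit, hshear, ncard_setOf_add_eq, ncard_nonsimpleButterfly_two, add_comm]
  congr 1
  exact sum_antidiagonal_mul_eq_sum_Ico (sBCount_zero n) k

/-- The recursion `s_B(n+1,k) = 2^{2ⁿ−1}·s_B(n,k) + Σ_{j=1}^{k−1} s_B(n,j)·s_B(n,k−j)`. -/
theorem sBCount_recursion (n k : ℕ) (hk : 1 ≤ k) :
    sBCount (n + 1) k =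
      2 ^ (2 ^ n - 1) * sBCount n k +
        ∑ j ∈ Finset.Ico 1 k, sBCount n j * sBCount n (k - j) :=
  sBCount_recursion_general n k
end

section
/- For an integer m ≥ 3 define h_m : ℝ → ℝ by h_m(x) = 1/m + (1 − 1/m)·x^m. Then h_m has exactly one fixed point x_m* in the open interval (0,1), and this fixed point satisfies 1/m < x_m* < (m−1)^{−1/(m−1)}. Moreover, there exists a constant K > 0 such that 0 < x_m* − 1/m ≤ K·m^{−m} for all m ≥ 3. -/
/-!
Write `m = n + 1` and `q(x) = n (x + x² + ⋯ + xⁿ) - 1`. Multiplying out,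
`(n + 1) (h(x) - x) = (x - 1) q(x)`, so the fixed points of `h` in `(0, 1)` are the roots of `q`
there, and `q` is strictly increasing on `[0, ∞)` with slope at least `n`.
At `x = 1/(n+1)` the identity gives `q(x) = -(n+1)⁻ⁿ < 0`. At `c = n^(-1/n)` we have
`cⁿ = 1/n < c`, hence `(n + 1) (h(c) - c) = 1 - n c < 0` and `q(c) > 0`. The intermediate value
theorem and monotonicity give a unique root between these two points, and the slope bound gives
`x* - 1/(n+1) ≤ (n (n+1)ⁿ)⁻¹ ≤ 2 (n+1)^-(n+1)`.
-/

/-- `h_m(x) = 1/m + (1 − 1/m)·x^m`. -/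
noncomputable def hFun (m : ℕ) (x : ℝ) : ℝ := 1 / (m : ℝ) + (1 - 1 / (m : ℝ)) * x ^ m

open Finset Set

/-- The polynomial `q_{n+1}` of the paper; indexing by `n = m - 1` avoids truncated subtraction. -/
noncomputable def qPoly (n : ℕ) (x : ℝ) : ℝ := n * ∑ j ∈ range n, x ^ (j + 1) - 1

lemma mul_hFun_sub_self (n : ℕ) (x : ℝ) :
    ((n : ℝ) + 1) * (hFun (n + 1) x - x) = (x - 1) * qPoly n x := by
  have hgeom : (∑ j ∈ range n, x ^ j) * (x - 1) = x ^ n - 1 := geom_sum_mul x n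
  have hshift : ∑ j ∈ range n, x ^ (j + 1) = x * ∑ j ∈ range n, x ^ j := by
    simp only [mul_sum, pow_succ, mul_comm]
  rw [hFun, qPoly, hshift]
  push_cast
  field_simp
  linear_combination -(n : ℝ) * x * hgeom

lemma hFun_eq_self_iff (n : ℕ) {x : ℝ} (hx : x ≠ 1) : hFun (n + 1) x = x ↔ qPoly n x = 0 := by
  rw [← sub_eq_zero, ← mul_right_inj' (by positivity : (n : ℝ) + 1 ≠ 0), mul_hFun_sub_self,
    mul_zero, mul_eq_zero, or_iff_right (sub_ne_zero.2 hx)]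

lemma hFun_lt_self_iff (n : ℕ) {x : ℝ} (hx : x < 1) : hFun (n + 1) x < x ↔ 0 < qPoly n x := by
  rw [← sub_neg, ← smul_neg_iff_of_pos_left (by positivity : (0 : ℝ) < n + 1), smul_eq_mul,
    mul_hFun_sub_self, ← smul_eq_mul, smul_neg_iff_of_neg_left (sub_neg.2 hx)]

lemma mul_sub_le_qPoly_sub (n : ℕ) {a b : ℝ} (ha : 0 ≤ a) (hab : a ≤ b) :
    n * (b - a) ≤ qPoly n b - qPoly n a := by
  rcases n with _ | n
  · simp [qPoly]
  have hsum : b - a ≤ ∑ j ∈ range (n + 1), (b ^ (j + 1) - a ^ (j + 1)) := by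
    rw [sum_range_succ', zero_add, pow_one, pow_one, le_add_iff_nonneg_left]
    exact sum_nonneg fun j _ => sub_nonneg.2 (pow_le_pow_left₀ ha hab _)
  calc ((n + 1 : ℕ) : ℝ) * (b - a)
      ≤ (n + 1 : ℕ) * ∑ j ∈ range (n + 1), (b ^ (j + 1) - a ^ (j + 1)) := by gcongr
    _ = qPoly (n + 1) b - qPoly (n + 1) a := by rw [qPoly, qPoly, sum_sub_distrib]; ring

lemma qPoly_strictMonoOn {n : ℕ} (hn : n ≠ 0) : StrictMonoOn (qPoly n) (Ici 0) := by
  intro a ha b _ hab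
  have hslope : 0 < (n : ℝ) * (b - a) := mul_pos (by positivity) (sub_pos.2 hab)
  linarith [mul_sub_le_qPoly_sub n ha hab.le]

lemma qPoly_inv_succ (n : ℕ) : qPoly n ((n : ℝ) + 1)⁻¹ = -(((n : ℝ) + 1) ^ n)⁻¹ := by
  rcases eq_or_ne n 0 with rfl | hn
  · simp [qPoly]
  have hx : ((n : ℝ) + 1)⁻¹ - 1 ≠ 0 := by
    simpa [sub_eq_zero] using hn
  apply mul_left_cancel₀ hx
  rw [← mul_hFun_sub_self, hFun]
  push_cast
  simp only [inv_pow]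
  field_simp
  ring

lemma qPoly_inv_succ_neg (n : ℕ) : qPoly n ((n : ℝ) + 1)⁻¹ < 0 := by
  rw [qPoly_inv_succ, neg_lt_zero]
  positivity

lemma rpow_neg_one_div_lt_one {n : ℕ} (hn : 2 ≤ n) : (n : ℝ) ^ (-1 / (n : ℝ)) < 1 :=
  Real.rpow_lt_one_of_one_lt_of_neg (by exact_mod_cast hn)
    (div_neg_of_neg_of_pos (by norm_num) (by exact_mod_cast (by omega : 0 < n)))

lemma rpow_neg_one_div_pow {n : ℕ} (hn : n ≠ 0) : ((n : ℝ) ^ (-1 / (n : ℝ))) ^ n = (n : ℝ)⁻¹ := by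
  rw [← Real.rpow_natCast, ← Real.rpow_mul (Nat.cast_nonneg n),
    div_mul_cancel₀ _ (by exact_mod_cast hn), Real.rpow_neg_one]

lemma qPoly_rpow_pos {n : ℕ} (hn : 2 ≤ n) : 0 < qPoly n ((n : ℝ) ^ (-1 / (n : ℝ))) := by
  set c := (n : ℝ) ^ (-1 / (n : ℝ))
  have hc0 : 0 < c := by positivity
  have hc1 : c < 1 := rpow_neg_one_div_lt_one hn
  have hcn : c ^ n = (n : ℝ)⁻¹ := rpow_neg_one_div_pow (by omega)
  have hnc : 1 < n * c := by
    calc (1 : ℝ) = n * c ^ n := by rw [hcn, mul_inv_cancel₀ (by positivity)]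
      _ < n * c := by gcongr; exact pow_lt_self_of_lt_one₀ hc0 hc1 (by omega)
  have hdefect : ((n : ℝ) + 1) * (hFun (n + 1) c - c) = 1 - n * c := by
    rw [hFun, pow_succ, hcn]
    push_cast
    field_simp
    ring
  rw [← hFun_lt_self_iff n hc1, ← sub_neg]
  exact neg_of_mul_neg_right (hdefect ▸ sub_neg.2 hnc) (by positivity)

lemma qPoly_eq_zero_bounds {n : ℕ} (hn : 2 ≤ n) {x : ℝ} (hx : 0 ≤ x) (hq : qPoly n x = 0) :
    ((n : ℝ) + 1)⁻¹ < x ∧ x < (n : ℝ) ^ (-1 / (n : ℝ)) := by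
  have hmono := qPoly_strictMonoOn (n := n) (by omega)
  constructor
  · exact (hmono.lt_iff_lt (mem_Ici.2 (by positivity)) hx).1 (hq ▸ qPoly_inv_succ_neg n)
  · exact (hmono.lt_iff_lt hx (mem_Ici.2 (by positivity))).1 (hq ▸ qPoly_rpow_pos hn)

lemma exists_qPoly_eq_zero {n : ℕ} (hn : 2 ≤ n) : ∃ x ∈ Ioo (0 : ℝ) 1, qPoly n x = 0 := by
  have hcont : Continuous (qPoly n) := by unfold qPoly; fun_prop
  have hsign := lt_trans (qPoly_inv_succ_neg n) (qPoly_rpow_pos hn)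
  have hle : ((n : ℝ) + 1)⁻¹ ≤ (n : ℝ) ^ (-1 / (n : ℝ)) :=
    ((qPoly_strictMonoOn (by omega)).lt_iff_lt (mem_Ici.2 (by positivity))
      (mem_Ici.2 (by positivity))).1 hsign |>.le
  obtain ⟨x, hx, hq⟩ := intermediate_value_Ioo hle hcont.continuousOn
    ⟨qPoly_inv_succ_neg n, qPoly_rpow_pos hn⟩
  exact ⟨x, Ioo_subset_Ioo (by positivity) (rpow_neg_one_div_lt_one hn).le hx, hq⟩

lemma sub_inv_succ_le_of_qPoly_eq_zero {n : ℕ} (hn : n ≠ 0) {x : ℝ}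
    (hx : ((n : ℝ) + 1)⁻¹ ≤ x) (hq : qPoly n x = 0) :
    x - ((n : ℝ) + 1)⁻¹ ≤ 2 * (((n : ℝ) + 1) ^ (n + 1))⁻¹ := by
  have hslope := mul_sub_le_qPoly_sub n (by positivity) hx
  rw [hq, qPoly_inv_succ, zero_sub, neg_neg] at hslope
  have hn1 : (1 : ℝ) ≤ n := by exact_mod_cast Nat.one_le_iff_ne_zero.2 hn
  calc x - ((n : ℝ) + 1)⁻¹ ≤ (((n : ℝ) + 1) ^ n)⁻¹ / n := by
        rw [le_div_iff₀ (by positivity)]; linarith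
    _ = ((n + 1) / n) * (((n : ℝ) + 1) ^ (n + 1))⁻¹ := by field_simp; ring
    _ ≤ 2 * (((n : ℝ) + 1) ^ (n + 1))⁻¹ := by
        gcongr
        rw [div_le_iff₀ (by positivity)]
        linarith

/-- For `m ≥ 3`, `h_m` has exactly one fixed point `x_m*` in `(0,1)`, it satisfies
`1/m < x_m* < (m−1)^{−1/(m−1)}`, and there is a constant `K > 0` with
`0 < x_m* − 1/m ≤ K·m^{−m}` for all `m ≥ 3`. -/
theorem hFun_fixed_point :
    (∀ m : ℕ, 3 ≤ m → ∃! x : ℝ, x ∈ Set.Ioo (0 : ℝ) 1 ∧ hFun m x = x) ∧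
    (∀ m : ℕ, 3 ≤ m → ∀ x : ℝ, x ∈ Set.Ioo (0 : ℝ) 1 → hFun m x = x →
      1 / (m : ℝ) < x ∧ x < ((m : ℝ) - 1) ^ (-(1 : ℝ) / ((m : ℝ) - 1))) ∧
    (∃ K : ℝ, 0 < K ∧ ∀ m : ℕ, 3 ≤ m → ∀ x : ℝ, x ∈ Set.Ioo (0 : ℝ) 1 → hFun m x = x →
      0 < x - 1 / (m : ℝ) ∧ x - 1 / (m : ℝ) ≤ K * ((m : ℝ) ^ m)⁻¹) := by
  have hroot (n : ℕ) (x : ℝ) (hx : x ∈ Ioo (0 : ℝ) 1) : hFun (n + 1) x = x ↔ qPoly n x = 0 :=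
    hFun_eq_self_iff n hx.2.ne
  refine ⟨fun m hm => ?_, fun m hm x hx hfx => ?_, ⟨2, two_pos, fun m hm x hx hfx => ?_⟩⟩ <;>
    obtain ⟨n, rfl⟩ := Nat.exists_eq_add_one_of_ne_zero (by omega : m ≠ 0) <;>
    push_cast [add_sub_cancel_right, one_div]
  · obtain ⟨x, hx, hq⟩ := exists_qPoly_eq_zero (by omega : 2 ≤ n)
    refine ⟨x, ⟨hx, (hroot n x hx).2 hq⟩, fun y ⟨hy, hfy⟩ => ?_⟩
    exact (qPoly_strictMonoOn (by omega)).injOn (mem_Ici.2 hy.1.le) (mem_Ici.2 hx.1.le)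
      (((hroot n y hy).1 hfy).trans hq.symm)
  · exact qPoly_eq_zero_bounds (by omega) hx.1.le ((hroot n x hx).1 hfx)
  · have hq := (hroot n x hx).1 hfx
    have hlow := (qPoly_eq_zero_bounds (by omega) hx.1.le hq).1
    exact ⟨sub_pos.2 hlow, sub_inv_succ_le_of_qPoly_eq_zero (by omega) hlow.le hq⟩
end

section
/- Define the real sequence (m_k)_{k ≥ 1} by m_1 = 1 and, for k ≥ 2, m_k = ((1/2)/((3/2)^k − 3/2)) · Σ_{j=1}^{k−1} C(k,j)·m_j·m_{k−j}. Then m_k ≤ (3/2)^{1−k} · k! for all k ≥ 1; consequently the series Σ_{k=1}^∞ m_k^{−1/(2k)} diverges (Carleman's condition for the Stieltjes moment problem holds for the sequence (m_k)). -/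
/-- The limiting moment sequence: `m₁ = 1` and for `k ≥ 2`,
`m_k = ((1/2)/((3/2)^k − 3/2)) · Σ_{j=1}^{k−1} C(k,j)·m_j·m_{k−j}`. -/
noncomputable def cycleMoment : ℕ → ℝ
  | 0 => 1
  | 1 => 1
  | k + 2 =>
    ((1 / 2) / ((3 / 2 : ℝ) ^ (k + 2) - 3 / 2)) *
      ∑ j ∈ (Finset.Ico 1 (k + 2)).attach,
        (((k + 2).choose j.1 : ℕ) : ℝ) * cycleMoment j.1 * cycleMoment (k + 2 - j.1)
  decreasing_by
  · have := j.2; rw [Finset.mem_Ico] at this; omega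
  · have := j.2; rw [Finset.mem_Ico] at this; omega

lemma aux_exp : ∀ n : ℕ, (n + 3 : ℝ) ≤ 2 * ((3:ℝ)/2)^(n+1) := by
  intro n
  induction n with
  | zero => norm_num
  | succ m ih =>
    have h : ((3:ℝ)/2)^(m+2) = (3/2) * (3/2)^(m+1) := by ring
    push_cast
    push_cast at ih
    rw [h]
    nlinarith [pow_pos (by norm_num : (0:ℝ) < 3/2) (m+1)]

lemma cycleMoment_key : ∀ k : ℕ, 0 < cycleMoment k ∧
    (1 ≤ k → cycleMoment k * ((3:ℝ)/2)^(k-1) ≤ (k.factorial : ℝ)) := by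
  intro k
  induction k using Nat.strong_induction_on with
  | _ k ih =>
    match k with
    | 0 => simp [cycleMoment]
    | 1 => simp [cycleMoment]
    | n + 2 =>
      have hc : (0:ℝ) < 3/2 := by norm_num
      have hden : (0:ℝ) < (3/2:ℝ)^(n+2) - 3/2 := by
        have : ((3:ℝ)/2)^1 < (3/2:ℝ)^(n+2) :=
          pow_lt_pow_right₀ (by norm_num) (by omega)
        simpa using this
      have hA : (0:ℝ) < (1/2) / ((3/2:ℝ)^(n+2) - 3/2) := by positivity
      have hpos : ∀ j ∈ (Finset.Ico 1 (n+2)).attach,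
          0 < (((n+2).choose j.1 : ℕ) : ℝ) * cycleMoment j.1 * cycleMoment (n+2-j.1) := by
        intro j _
        have hj := j.2; rw [Finset.mem_Ico] at hj
        have h1 : 0 < cycleMoment j.1 := (ih j.1 (by omega)).1
        have h2 : 0 < cycleMoment (n+2-j.1) := (ih (n+2-j.1) (by omega)).1
        have h3 : (0:ℝ) < (((n+2).choose j.1 : ℕ) : ℝ) := by
          exact_mod_cast Nat.choose_pos (by omega)
        positivity
      have hSpos : 0 < ∑ j ∈ (Finset.Ico 1 (n+2)).attach,
          (((n+2).choose j.1 : ℕ) : ℝ) * cycleMoment j.1 * cycleMoment (n+2-j.1) :=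
        Finset.sum_pos hpos ⟨⟨1, by simp⟩, Finset.mem_attach _ _⟩
      constructor
      · rw [cycleMoment]
        exact mul_pos hA hSpos
      · intro _
        rw [cycleMoment]
        set S := ∑ j ∈ (Finset.Ico 1 (n+2)).attach,
          (((n+2).choose j.1 : ℕ) : ℝ) * cycleMoment j.1 * cycleMoment (n+2-j.1) with hS
        -- term bound
        have hterm : ∀ j ∈ (Finset.Ico 1 (n+2)).attach,
            ((((n+2).choose j.1 : ℕ) : ℝ) * cycleMoment j.1 * cycleMoment (n+2-j.1)) *
              ((3:ℝ)/2)^n ≤ ((n+2).factorial : ℝ) := by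
          intro j _
          have hj := j.2; rw [Finset.mem_Ico] at hj
          obtain ⟨hj1, hj2⟩ := hj
          have h1 := (ih j.1 (by omega)).2 hj1
          have h2 := (ih (n+2-j.1) (by omega)).2 (by omega)
          have hp1 : 0 < cycleMoment j.1 := (ih j.1 (by omega)).1
          have hp2 : 0 < cycleMoment (n+2-j.1) := (ih (n+2-j.1) (by omega)).1
          have hexp : (j.1 - 1) + ((n+2-j.1) - 1) = n := by omega
          have hmul : (cycleMoment j.1 * ((3:ℝ)/2)^(j.1-1)) *
              (cycleMoment (n+2-j.1) * ((3:ℝ)/2)^((n+2-j.1)-1)) ≤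
              ((j.1).factorial : ℝ) * (((n+2-j.1)).factorial : ℝ) := by
            apply mul_le_mul h1 h2 (by positivity) (by positivity)
          have hfac : ((n+2).choose j.1 : ℕ) * (j.1).factorial * ((n+2-j.1)).factorial
              = (n+2).factorial := Nat.choose_mul_factorial_mul_factorial (by omega)
          calc (((n+2).choose j.1 : ℕ) : ℝ) * cycleMoment j.1 * cycleMoment (n+2-j.1) *
                ((3:ℝ)/2)^n
              = (((n+2).choose j.1 : ℕ) : ℝ) *
                ((cycleMoment j.1 * ((3:ℝ)/2)^(j.1-1)) *
                 (cycleMoment (n+2-j.1) * ((3:ℝ)/2)^((n+2-j.1)-1))) := by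
                have hpw : ((3:ℝ)/2)^n = ((3:ℝ)/2)^(j.1-1) * ((3:ℝ)/2)^((n+2-j.1)-1) := by
                  rw [← pow_add, hexp]
                rw [hpw]; ring
            _ ≤ (((n+2).choose j.1 : ℕ) : ℝ) *
                (((j.1).factorial : ℝ) * (((n+2-j.1)).factorial : ℝ)) := by
                apply mul_le_mul_of_nonneg_left hmul (by positivity)
            _ = ((n+2).factorial : ℝ) := by rw [← hfac]; push_cast; ring
        have hsum : S * ((3:ℝ)/2)^n ≤ (n+1) * ((n+2).factorial : ℝ) := by
          rw [hS, Finset.sum_mul]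
          calc ∑ j ∈ (Finset.Ico 1 (n+2)).attach,
                ((((n+2).choose j.1 : ℕ) : ℝ) * cycleMoment j.1 * cycleMoment (n+2-j.1)) *
                  ((3:ℝ)/2)^n
              ≤ ∑ _j ∈ (Finset.Ico 1 (n+2)).attach, ((n+2).factorial : ℝ) :=
                Finset.sum_le_sum hterm
            _ = (n+1) * ((n+2).factorial : ℝ) := by
                rw [Finset.sum_const, Finset.card_attach, Nat.card_Ico]
                simp [nsmul_eq_mul]
        -- final
        have hA' : ((1:ℝ)/2) / ((3/2:ℝ)^(n+2) - 3/2) * (3/2) * (n+1) ≤ 1 := by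
          rw [div_mul_eq_mul_div, div_mul_eq_mul_div, div_le_one hden]
          have haux := aux_exp n
          have h32 : ((3:ℝ)/2)^(n+2) = (3/2) * (3/2)^(n+1) := by ring
          rw [h32]
          push_cast at haux ⊢
          nlinarith [pow_pos hc (n+1)]
        have hpow : ((3:ℝ)/2)^(n+2-1) = (3/2) * ((3:ℝ)/2)^n := by
          norm_num; ring
        calc ((1/2) / ((3/2:ℝ)^(n+2) - 3/2)) * S * ((3:ℝ)/2)^(n+2-1)
            = ((1/2) / ((3/2:ℝ)^(n+2) - 3/2)) * (3/2) * (S * ((3:ℝ)/2)^n) := by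
              rw [hpow]; ring
          _ ≤ ((1/2) / ((3/2:ℝ)^(n+2) - 3/2)) * (3/2) * ((n+1) * ((n+2).factorial : ℝ)) := by
              apply mul_le_mul_of_nonneg_left hsum (by positivity)
          _ = (((1:ℝ)/2) / ((3/2:ℝ)^(n+2) - 3/2) * (3/2) * (n+1)) * ((n+2).factorial : ℝ) := by
              ring
          _ ≤ 1 * ((n+2).factorial : ℝ) := by
              apply mul_le_mul_of_nonneg_right hA' (by positivity)
          _ = ((n+2).factorial : ℝ) := one_mul _

/-- `m_k ≤ (3/2)^{1−k}·k!` for all `k ≥ 1`; consequently Carleman's condition holds: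
the series `Σ_{k≥1} m_k^{−1/(2k)}` diverges. -/
theorem cycleMoment_carleman :
    (∀ k : ℕ, 1 ≤ k → cycleMoment k ≤ ((3 : ℝ) / 2) ^ ((1 : ℤ) - (k : ℤ)) * (k.factorial : ℝ)) ∧
    Filter.Tendsto
      (fun K : ℕ => ∑ k ∈ Finset.Icc 1 K, (cycleMoment k) ^ (-(1 : ℝ) / (2 * (k : ℝ))))
      Filter.atTop Filter.atTop := by
  have hbound : ∀ k : ℕ, 1 ≤ k →
      cycleMoment k ≤ ((3 : ℝ) / 2) ^ ((1 : ℤ) - (k : ℤ)) * (k.factorial : ℝ) := by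
    intro k hk
    have h := (cycleMoment_key k).2 hk
    have hz : ((1:ℤ) - (k:ℤ)) = -(((k-1 : ℕ)) : ℤ) := by omega
    rw [hz, zpow_neg, zpow_natCast]
    rw [inv_mul_eq_div, le_div_iff₀ (by positivity)]
    exact h
  refine ⟨hbound, ?_⟩
  have hlow : ∀ k : ℕ, 1 ≤ k →
      (1:ℝ)/(k:ℝ) ≤ (cycleMoment k) ^ (-(1 : ℝ) / (2 * (k : ℝ))) := by
    intro k hk
    have hk0 : (0:ℝ) < k := by exact_mod_cast hk
    have hk1 : (1:ℝ) ≤ k := by exact_mod_cast hk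
    have hpos := (cycleMoment_key k).1
    have hle : cycleMoment k ≤ (k:ℝ)^k := by
      have h1 := (cycleMoment_key k).2 hk
      have h2 : (1:ℝ) ≤ ((3:ℝ)/2)^(k-1) := one_le_pow₀ (by norm_num)
      have h3 : cycleMoment k ≤ (k.factorial : ℝ) := by nlinarith
      have h4 : (k.factorial : ℝ) ≤ (k:ℝ)^k := by exact_mod_cast Nat.factorial_le_pow k
      linarith
    have he : -(1:ℝ) / (2 * (k:ℝ)) ≤ 0 :=
      div_nonpos_of_nonpos_of_nonneg (by norm_num) (by positivity)
    have step1 : ((k:ℝ)^k) ^ (-(1 : ℝ) / (2 * (k : ℝ))) ≤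
        (cycleMoment k) ^ (-(1 : ℝ) / (2 * (k : ℝ))) :=
      Real.rpow_le_rpow_of_nonpos hpos hle he
    have step2 : ((k:ℝ)^k) ^ (-(1 : ℝ) / (2 * (k : ℝ))) = (k:ℝ) ^ (-(1:ℝ)/2) := by
      rw [← Real.rpow_natCast (k:ℝ) k, ← Real.rpow_mul hk0.le]
      congr 1
      field_simp
    have step3 : (k:ℝ) ^ (-(1:ℝ)) ≤ (k:ℝ) ^ (-(1:ℝ)/2) :=
      Real.rpow_le_rpow_of_exponent_le hk1 (by norm_num)
    have step4 : (k:ℝ) ^ (-(1:ℝ)) = 1/(k:ℝ) := by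
      rw [Real.rpow_neg_one]; exact (one_div _).symm
    calc (1:ℝ)/(k:ℝ) = (k:ℝ) ^ (-(1:ℝ)) := step4.symm
      _ ≤ (k:ℝ) ^ (-(1:ℝ)/2) := step3
      _ = ((k:ℝ)^k) ^ (-(1 : ℝ) / (2 * (k : ℝ))) := step2.symm
      _ ≤ (cycleMoment k) ^ (-(1 : ℝ) / (2 * (k : ℝ))) := step1
  have hharm : Filter.Tendsto (fun K : ℕ => ∑ k ∈ Finset.Icc 1 K, (1:ℝ)/(k:ℝ))
      Filter.atTop Filter.atTop := by
    have heq : ∀ K : ℕ, ∑ k ∈ Finset.Icc 1 K, (1:ℝ)/(k:ℝ)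
        = ∑ i ∈ Finset.range K, (1:ℝ)/((i:ℝ)+1) := by
      intro K
      rw [← Finset.Ico_add_one_right_eq_Icc, Finset.sum_Ico_eq_sum_range]
      simp [add_comm]
    simp_rw [heq]
    exact Real.tendsto_sum_range_one_div_nat_succ_atTop
  apply Filter.tendsto_atTop_mono _ hharm
  intro K
  apply Finset.sum_le_sum
  intro k hk
  rw [Finset.mem_Icc] at hk
  exact hlow k hk.1
end
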